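/- Let (Ω,d) be a metric space satisfying Reshetnyak's quadruple comparison inequality: d(x1,x3)^2 + d(x2,x4)^2 ≤ d(x2,x3)^2 + d(x4,x1)^2 + 2·d(x1,x2)·d(x3,x4) for all x1,x2,x3,x4 ∈ Ω. For ω, ω0 ∈ Ω define g_{ω0}^{ω}(x) = d(x,ω)^2 − d(x,ω0)^2. Then for all x, x' ∈ Ω, |g_{ω0}^{ω}(x) − g_{ω0}^{ω}(x')| ≤ 2·d(ω,ω0)·d(x,x'). -/
import Mathlib

open Metric

/-- Reshetnyak's quadruple comparison inequality for a metric space. -/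
def QuadrupleComparison (Ω : Type*) [MetricSpace Ω] : Prop :=
  ∀ x1 x2 x3 x4 : Ω,
    dist x1 x3 ^ 2 + dist x2 x4 ^ 2 ≤
      dist x2 x3 ^ 2 + dist x4 x1 ^ 2 + 2 * dist x1 x2 * dist x3 x4

/-- in a metric space satisfying Reshetnyak's quadruple comparison
inequality, the function `g_{ω0}^{ω}(x) = d(x,ω)^2 − d(x,ω0)^2` is
`2·d(ω,ω0)`-Lipschitz: `|g(x) − g(x')| ≤ 2 d(ω,ω0) d(x,x')`. -/
theorem g_lipschitz
    {Ω : Type*} [MetricSpace Ω] (hquad : QuadrupleComparison Ω)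
    (ω ω0 x x' : Ω) :
    |(dist x ω ^ 2 - dist x ω0 ^ 2) - (dist x' ω ^ 2 - dist x' ω0 ^ 2)| ≤
      2 * dist ω ω0 * dist x x' := by
  have h1 := hquad ω ω0 x x'
  have h2 := hquad ω ω0 x' x
  rw [abs_le]
  have e1 : dist ω x = dist x ω := dist_comm _ _
  have e2 : dist ω x' = dist x' ω := dist_comm _ _
  have e3 : dist ω0 x = dist x ω0 := dist_comm _ _
  have e4 : dist ω0 x' = dist x' ω0 := dist_comm _ _
  have e5 : dist x' x = dist x x' := dist_comm _ _
  simp only [e1, e2, e3, e4, e5] at h1 h2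
  constructor <;> linarith
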